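/- arXiv:2605.00040 — 11 statements merged into one kernel-verified Lean document; each statement's English description precedes it below -/
import Mathlib

section
/- If n ≥ 3 and A ⊆ {1, 2, ..., 2n} is a set with |A| ≥ n + 1, then there exist three distinct integers b₁, b₂, b₃ (not necessarily positive) such that all three pairwise sums b₁+b₂, b₁+b₃, b₂+b₃ are contained in A. -/
/-- Key construction: three distinct elements of `A` with even sum give the triple. -/
lemma key_lemma (A : Finset ℤ) (x y z : ℤ) (hx : x ∈ A) (hy : y ∈ A) (hz : z ∈ A)
    (hxy : x ≠ y) (hxz : x ≠ z) (hyz : y ≠ z) (hpar : Even (x + y + z)) :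
    ∃ b₁ b₂ b₃ : ℤ, b₁ ≠ b₂ ∧ b₁ ≠ b₃ ∧ b₂ ≠ b₃ ∧
      b₁ + b₂ ∈ A ∧ b₁ + b₃ ∈ A ∧ b₂ + b₃ ∈ A := by
  obtain ⟨k, hk⟩ := hpar
  refine ⟨k - z, k - y, k - x, by omega, by omega, by omega, ?_, ?_, ?_⟩
  · have : k - z + (k - y) = x := by omega
    rwa [this]
  · have : k - z + (k - x) = y := by omega
    rwa [this]
  · have : k - y + (k - x) = z := by omega
    rwa [this]

theorem stmt_0 (n : ℕ) (hn : 3 ≤ n) (A : Finset ℤ)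
    (hA : A ⊆ Finset.Icc 1 (2 * (n : ℤ))) (hcard : n + 1 ≤ A.card) :
    ∃ b₁ b₂ b₃ : ℤ, b₁ ≠ b₂ ∧ b₁ ≠ b₃ ∧ b₂ ≠ b₃ ∧
      b₁ + b₂ ∈ A ∧ b₁ + b₃ ∈ A ∧ b₂ + b₃ ∈ A := by
  classical
  set O := A.filter (fun a => ¬ Even a) with hO
  set E := A.filter (fun a => Even a) with hE
  have hsplit : E.card + O.card = A.card := Finset.card_filter_add_card_filter_not _
  -- O.card ≤ n, via injection a ↦ (a+1)/2 into Icc 1 n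
  have hOn : O.card ≤ n := by
    have : O.card ≤ (Finset.Icc (1:ℤ) (n:ℤ)).card := by
      apply Finset.card_le_card_of_injOn (fun a => (a + 1) / 2)
      · intro a ha
        simp only [Finset.mem_coe, hO, Finset.mem_filter] at ha
        have h1 := hA ha.1
        rw [Finset.mem_Icc] at h1
        simp only [Finset.mem_coe, Finset.mem_Icc]
        have hodd : Odd a := Int.not_even_iff_odd.mp ha.2
        obtain ⟨j, hj⟩ := hodd
        omega
      · intro a ha b hb hab
        simp only [Finset.mem_coe, hO, Finset.mem_filter] at ha hb
        obtain ⟨j, hj⟩ := Int.not_even_iff_odd.mp ha.2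
        obtain ⟨j', hj'⟩ := Int.not_even_iff_odd.mp hb.2
        simp only at hab
        omega
    rwa [Int.card_Icc, show (n:ℤ) + 1 - 1 = (n:ℤ) by ring, Int.toNat_natCast] at this
  by_cases h2 : 2 ≤ O.card
  · -- two odds and one even
    have hE1 : 1 ≤ E.card := by omega
    obtain ⟨e, he⟩ := Finset.card_pos.mp hE1
    obtain ⟨o₁, ho₁, o₂, ho₂, hne⟩ := Finset.one_lt_card.mp h2
    simp only [hE, hO, Finset.mem_filter] at he ho₁ ho₂
    have hne1 : o₁ ≠ e := fun h => ho₁.2 (h ▸ he.2)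
    have hne2 : o₂ ≠ e := fun h => ho₂.2 (h ▸ he.2)
    apply key_lemma A o₁ o₂ e ho₁.1 ho₂.1 he.1 hne hne1 hne2
    obtain ⟨j, hj⟩ := Int.not_even_iff_odd.mp ho₁.2
    obtain ⟨j', hj'⟩ := Int.not_even_iff_odd.mp ho₂.2
    obtain ⟨k, hk⟩ := he.2
    exact ⟨j + j' + k + 1, by omega⟩
  · -- three evens
    have hE3 : 3 ≤ E.card := by omega
    obtain ⟨e₁, he₁⟩ := Finset.card_pos.mp (by omega : 0 < E.card)
    have h2' : 0 < (E.erase e₁).card := by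
      rw [Finset.card_erase_of_mem he₁]; omega
    obtain ⟨e₂, he₂⟩ := Finset.card_pos.mp h2'
    have h3' : 0 < ((E.erase e₁).erase e₂).card := by
      rw [Finset.card_erase_of_mem he₂, Finset.card_erase_of_mem he₁]; omega
    obtain ⟨e₃, he₃⟩ := Finset.card_pos.mp h3'
    have h21 : e₂ ≠ e₁ := Finset.ne_of_mem_erase he₂
    have h32 : e₃ ≠ e₂ := Finset.ne_of_mem_erase he₃
    have h31 : e₃ ≠ e₁ := Finset.ne_of_mem_erase (Finset.mem_of_mem_erase he₃)
    have he₂' : e₂ ∈ E := Finset.mem_of_mem_erase he₂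
    have he₃' : e₃ ∈ E := Finset.mem_of_mem_erase (Finset.mem_of_mem_erase he₃)
    simp only [hE, Finset.mem_filter] at he₁ he₂' he₃'
    apply key_lemma A e₁ e₂ e₃ he₁.1 he₂'.1 he₃'.1 h21.symm h31.symm h32.symm
    obtain ⟨k₁, hk₁⟩ := he₁.2
    obtain ⟨k₂, hk₂⟩ := he₂'.2
    obtain ⟨k₃, hk₃⟩ := he₃'.2
    exact ⟨k₁ + k₂ + k₃, by omega⟩
end

section
/- If n ≥ 3 and A ⊆ {1, 2, ..., 2n} satisfies |A| ≥ n + 1, then there exist integers 0 ≤ b₁ < b₂ < b₃ (non-negative, distinct) whose three pairwise sums b₁+b₂, b₁+b₃, b₂+b₃ are all contained in A. -/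
/-!
Three pairwise sums `b₁ + b₂ < b₁ + b₃ < b₂ + b₃` of integers `0 ≤ b₁ < b₂ < b₃` are exactly the
triples `p < q < r` with `r ≤ p + q` and `p + q + r` even (possibly degenerate triangles with
even perimeter), so it suffices to find such a triple in `A`. We induct on `n`, the case `n = 3` being a finite check. If at most `n` elements of `A`
lie in `[1, 2n]`, then both `2n + 1` and `2n + 2` lie in `A`; an odd `x ≤ 2n` in `A` then gives
the triple `(x, 2n + 1, 2n + 2)`, and otherwise `A` contains all even numbers up to `2n`, among
them the triple `(2, 4, 6)`.
-/

open Finset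

def HasEvenTriangle (A : Finset ℤ) : Prop :=
  ∃ p ∈ A, ∃ q ∈ A, ∃ r ∈ A, p < q ∧ q < r ∧ r ≤ p + q ∧ Even (p + q + r)

instance : DecidablePred HasEvenTriangle := fun A =>
  inferInstanceAs (Decidable (∃ p ∈ A, ∃ q ∈ A, ∃ r ∈ A, p < q ∧ q < r ∧ r ≤ p + q ∧ _))

namespace HasEvenTriangle

theorem mono {A B : Finset ℤ} (hAB : A ⊆ B) (hA : HasEvenTriangle A) : HasEvenTriangle B := by
  obtain ⟨p, hp, q, hq, r, hr, h⟩ := hA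
  exact ⟨p, hAB hp, q, hAB hq, r, hAB hr, h⟩

theorem exists_pairwise_sums_mem {A : Finset ℤ} (hA : HasEvenTriangle A) :
    ∃ b₁ b₂ b₃ : ℤ, 0 ≤ b₁ ∧ b₁ < b₂ ∧ b₂ < b₃ ∧
      b₁ + b₂ ∈ A ∧ b₁ + b₃ ∈ A ∧ b₂ + b₃ ∈ A := by
  obtain ⟨p, hp, q, hq, r, hr, hpq, hqr, hrpq, s, hs⟩ := hA
  refine ⟨s - r, s - q, s - p, by omega, by omega, by omega, ?_, ?_, ?_⟩ <;>
    [convert hp using 1; convert hq using 1; convert hr using 1] <;> omega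

end HasEvenTriangle

theorem filter_le_subset_Icc {α : Type*} [LinearOrder α] [LocallyFiniteOrder α] {A : Finset α}
    {a b : α} (hA : A ⊆ Icc a b) (c : α) : A.filter (· ≤ c) ⊆ Icc a c := fun x hx => by
  obtain ⟨hxA, hxc⟩ := mem_filter.mp hx
  exact mem_Icc.mpr ⟨(mem_Icc.mp (hA hxA)).1, hxc⟩

theorem hasEvenTriangle_of_subset_Icc_six {A : Finset ℤ} (hA : A ⊆ Icc 1 6) (hcard : 4 ≤ #A) :
    HasEvenTriangle A := by
  have hcheck : ∀ B ∈ (Icc (1 : ℤ) 6).powerset, 4 ≤ #B → HasEvenTriangle B := by decide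
  exact hcheck A (mem_powerset.mpr hA) hcard

theorem two_mul_mem_of_forall_not_odd {n : ℕ} {B : Finset ℤ} (hB : B ⊆ Icc 1 (2 * n))
    (hcard : n ≤ #B) (heven : ∀ x ∈ B, ¬Odd x) {k : ℤ} (hk : k ∈ Icc 1 (n : ℤ)) : 2 * k ∈ B := by
  have hBE : B ⊆ (Icc 1 (n : ℤ)).image (2 * ·) := by
    intro x hx
    obtain ⟨m, rfl⟩ := Int.not_odd_iff_even.mp (heven x hx)
    have := mem_Icc.mp (hB hx)
    exact mem_image.mpr ⟨m, mem_Icc.mpr ⟨by omega, by omega⟩, by omega⟩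
  have hEcard : #((Icc 1 (n : ℤ)).image (2 * ·)) = n := by
    rw [card_image_of_injective _ fun a b h => by omega, Int.card_Icc]
    omega
  rw [eq_of_subset_of_card_le hBE (by omega)]
  exact mem_image_of_mem _ hk

theorem hasEvenTriangle_of_card_filter_le {n : ℕ} (hn : 3 ≤ n) {A : Finset ℤ}
    (hA : A ⊆ Icc 1 (2 * n + 2)) (hcard : n + 2 ≤ #A) (hlow : #(A.filter (· ≤ 2 * (n : ℤ))) ≤ n) :
    HasEvenTriangle A := by
  have hhigh : A.filter (¬· ≤ 2 * (n : ℤ)) = {2 * (n : ℤ) + 1, 2 * (n : ℤ) + 2} := by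
    refine eq_of_subset_of_card_le (fun x hx => ?_) ?_
    · obtain ⟨hxA, hxn⟩ := mem_filter.mp hx
      have := mem_Icc.mp (hA hxA)
      rw [mem_insert, mem_singleton]
      omega
    · have := card_filter_add_card_filter_not (s := A) (· ≤ 2 * (n : ℤ))
      rw [card_pair (by omega)]
      omega
  have htop : 2 * (n : ℤ) + 1 ∈ A ∧ 2 * (n : ℤ) + 2 ∈ A := by
    have hpair := filter_subset (¬· ≤ 2 * (n : ℤ)) A
    rwa [hhigh, insert_subset_iff, singleton_subset_iff] at hpair
  by_cases hodd : ∃ x ∈ A.filter (· ≤ 2 * (n : ℤ)), Odd x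
  · obtain ⟨x, hx, m, rfl⟩ := hodd
    obtain ⟨hxA, hxn⟩ := mem_filter.mp hx
    have := mem_Icc.mp (hA hxA)
    exact ⟨_, hxA, _, htop.1, _, htop.2, by omega, by omega, by omega, m + 2 * n + 2, by ring⟩
  · push Not at hodd
    have hlow' := card_filter_add_card_filter_not (s := A) (· ≤ 2 * (n : ℤ))
    rw [hhigh, card_pair (by omega)] at hlow'
    have hmem (k : ℤ) (h1 : 1 ≤ k) (h3 : k ≤ 3) : 2 * k ∈ A :=
      filter_subset _ A <| two_mul_mem_of_forall_not_odd (filter_le_subset_Icc hA _)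
        (by omega) hodd (mem_Icc.mpr ⟨h1, by omega⟩)
    exact ⟨_, hmem 1 le_rfl (by norm_num), _, hmem 2 (by norm_num) (by norm_num),
      _, hmem 3 (by norm_num) le_rfl, by norm_num, by norm_num, by norm_num, by decide⟩

theorem hasEvenTriangle_of_card {n : ℕ} (hn : 3 ≤ n) {A : Finset ℤ}
    (hA : A ⊆ Icc 1 (2 * n)) (hcard : n + 1 ≤ #A) : HasEvenTriangle A := by
  induction n, hn using Nat.le_induction generalizing A with
  | base => exact hasEvenTriangle_of_subset_Icc_six hA hcard
  | succ n hn ih =>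
    push_cast at hA
    by_cases hlow : n + 1 ≤ #(A.filter (· ≤ 2 * (n : ℤ)))
    · exact (ih (filter_le_subset_Icc hA _) hlow).mono (filter_subset _ A)
    · exact hasEvenTriangle_of_card_filter_le hn hA hcard (by omega)

theorem stmt_3 (n : ℕ) (hn : 3 ≤ n) (A : Finset ℤ)
    (hA : A ⊆ Finset.Icc 1 (2 * (n : ℤ))) (hcard : n + 1 ≤ A.card) :
    ∃ b₁ b₂ b₃ : ℤ, 0 ≤ b₁ ∧ b₁ < b₂ ∧ b₂ < b₃ ∧
      b₁ + b₂ ∈ A ∧ b₁ + b₃ ∈ A ∧ b₂ + b₃ ∈ A :=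
  (hasEvenTriangle_of_card hn hA hcard).exists_pairwise_sums_mem
end

section
/- If n ≥ 3 and A ⊆ {1, 2, ..., 2n} satisfies |A| ≥ n + 3, then there exist four distinct integers b₁, b₂, b₃, b₄ such that all six pairwise sums bᵢ + bⱼ (1 ≤ i < j ≤ 4) are contained in A. -/
theorem stmt_4 (n : ℕ) (hn : 3 ≤ n) (A : Finset ℤ)
    (hA : A ⊆ Finset.Icc 1 (2 * (n : ℤ))) (hcard : n + 3 ≤ A.card) :
    ∃ b : Fin 4 → ℤ, Function.Injective b ∧
      ∀ i j : Fin 4, i < j → b i + b j ∈ A := by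
  set m : ℤ := 2 * (n : ℤ) + 1 with hm
  have hmem : ∀ x ∈ A, 1 ≤ x ∧ x ≤ 2 * (n : ℤ) := by
    intro x hx; exact Finset.mem_Icc.mp (hA hx)
  set B : Finset ℤ := A.image (fun x => m - x) with hB
  have hBcard : B.card = A.card :=
    Finset.card_image_of_injective _ (fun a b h => by omega)
  have hBsub : B ⊆ Finset.Icc 1 (2 * (n : ℤ)) := by
    intro x hx
    simp only [hB, Finset.mem_image] at hx
    obtain ⟨a, ha, rfl⟩ := hx
    have := hmem a ha
    simp only [Finset.mem_Icc]; omega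
  have hIcc : (Finset.Icc (1:ℤ) (2 * (n:ℤ))).card = 2 * n := by
    rw [Int.card_Icc]; omega
  have hunion : (A ∪ B).card ≤ 2 * n := by
    have h1 : A ∪ B ⊆ Finset.Icc 1 (2 * (n : ℤ)) := Finset.union_subset hA hBsub
    calc (A ∪ B).card ≤ (Finset.Icc (1:ℤ) (2 * (n:ℤ))).card := Finset.card_le_card h1
      _ = 2 * n := hIcc
  have hinter : 6 ≤ (A ∩ B).card := by
    have := Finset.card_inter_add_card_union A B
    omega
  set R : Finset ℤ := A ∩ B with hR
  have hRmem : ∀ x ∈ R, x ∈ A ∧ m - x ∈ A := by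
    intro x hx
    rw [hR, Finset.mem_inter] at hx
    refine ⟨hx.1, ?_⟩
    obtain ⟨a, ha, h⟩ := Finset.mem_image.mp (hB ▸ hx.2)
    have : m - x = a := by omega
    rwa [this]
  have hRsymm : ∀ x ∈ R, m - x ∈ R := by
    intro x hx
    obtain ⟨h1, h2⟩ := hRmem x hx
    rw [hR, Finset.mem_inter]
    refine ⟨h2, ?_⟩
    rw [hB, Finset.mem_image]
    exact ⟨x, h1, rfl⟩
  set Rev : Finset ℤ := R.filter (fun x => x % 2 = 0) with hRev
  have hodd : (R.filter (fun x => ¬ x % 2 = 0)).card ≤ Rev.card := by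
    apply Finset.card_le_card_of_injOn (fun x => m - x)
    · intro x hx
      rw [Finset.mem_coe, Finset.mem_filter] at hx
      beta_reduce
      rw [Finset.mem_coe, hRev, Finset.mem_filter]
      exact ⟨hRsymm x hx.1, by omega⟩
    · intro a _ b _ h; simp only at h; omega
  have hsplit : Rev.card + (R.filter (fun x => ¬ x % 2 = 0)).card = R.card := by
    rw [hRev]
    exact Finset.card_filter_add_card_filter_not (s := R) (p := fun x => x % 2 = 0)
  have hRev3 : 3 ≤ Rev.card := by omega
  obtain ⟨t, hts, htc⟩ := Finset.exists_subset_card_eq hRev3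
  obtain ⟨u1, u2, u3, h12, h13, h23, rfl⟩ := Finset.card_eq_three.mp htc
  have hu1 : u1 ∈ Rev := hts (by simp)
  have hu2 : u2 ∈ Rev := hts (by simp)
  have hu3 : u3 ∈ Rev := hts (by simp)
  rw [hRev, Finset.mem_filter] at hu1 hu2 hu3
  obtain ⟨hA1, hA1'⟩ := hRmem u1 hu1.1
  obtain ⟨hA2, hA2'⟩ := hRmem u2 hu2.1
  obtain ⟨hA3, hA3'⟩ := hRmem u3 hu3.1
  have he1 : u1 = 2 * (u1 / 2) := by omega
  have he2 : u2 = 2 * (u2 / 2) := by omega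
  have he3 : u3 = 2 * (u3 / 2) := by omega
  set v1 := u1 / 2
  set v2 := u2 / 2
  set v3 := u3 / 2
  refine ⟨![v2 + v3 - v1, m - v1 - v2 - v3, v1 + v2 - v3, v1 - v2 + v3], ?_, ?_⟩
  · intro i j h
    fin_cases i <;> fin_cases j <;> (try rfl) <;> (exfalso; simp at h; omega)
  · intro i j hij
    fin_cases i <;> fin_cases j <;> (try exact absurd hij (by decide)) <;> simp <;>
      first
      | (convert hA1 using 1; omega)
      | (convert hA2 using 1; omega)
      | (convert hA3 using 1; omega)
      | (convert hA1' using 1; omega)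
      | (convert hA2' using 1; omega)
      | (convert hA3' using 1; omega)
end

section
/- For every n ≥ 2, the set A = {1, 3, 5, ..., 2n-1} ∪ {2n-2, 2n} ⊆ {1, ..., 2n} has cardinality n + 2 (for n ≥ 2) and contains no complete set of six pairwise sums of four distinct integers; that is, there do not exist distinct integers b₁, b₂, b₃, b₄ with bᵢ + bⱼ ∈ A for all 1 ≤ i < j ≤ 4. -/
/-!
Six pairwise sums of four distinct integers cannot all lie in a set `A` whose odd elements are at
most `2m - 1` and whose even elements are `2m - 2` or `2m`. If three of the integers have the same
parity, their three pairwise sums are distinct even elements of `A`. Otherwise they split into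
pairs `{a, b}`, `{c, d}` of equal parity: `a + b` and `c + d` are even, so the total is at least
`4m - 4`, while the four cross sums are odd, hence at most `2m - 1`. Pairing complementary cross
sums forces all four into `{2m - 3, 2m - 1}`; as `a + c ≠ a + d` and `b + c ≠ b + d`, both pairs
sum to `4m - 4`, whence `a = b`.
-/

open Finset

section SumQuadruple

variable {A : Set ℤ} {m : ℤ}

theorem false_of_three_even_sums (heven : ∀ x ∈ A, Even x → x = 2 * m - 2 ∨ x = 2 * m)
    {a b c : ℤ} (hab : a ≠ b) (hac : a ≠ c) (hbc : b ≠ c)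
    (hAab : a + b ∈ A) (hAac : a + c ∈ A) (hAbc : b + c ∈ A)
    (hEab : Even (a + b)) (hEac : Even (a + c)) : False := by
  have hEbc : Even (b + c) := by
    rw [Int.even_iff] at hEab hEac ⊢
    omega
  have := heven _ hAab hEab
  have := heven _ hAac hEac
  have := heven _ hAbc hEbc
  omega

theorem false_of_two_even_sums_of_four_odd_sums (hodd : ∀ x ∈ A, Odd x → x ≤ 2 * m - 1)
    (heven : ∀ x ∈ A, Even x → x = 2 * m - 2 ∨ x = 2 * m)
    {a b c d : ℤ} (hab : a ≠ b) (hcd : c ≠ d)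
    (hAab : a + b ∈ A) (hAac : a + c ∈ A) (hAad : a + d ∈ A)
    (hAbc : b + c ∈ A) (hAbd : b + d ∈ A) (hAcd : c + d ∈ A)
    (hEab : Even (a + b)) (hOac : Odd (a + c)) (hOad : Odd (a + d)) : False := by
  have hE : ∀ x ∈ A, x % 2 = 0 → x = 2 * m - 2 ∨ x = 2 * m :=
    fun x hx h ↦ heven x hx (Int.even_iff.2 h)
  have hO : ∀ x ∈ A, x % 2 = 1 → x ≤ 2 * m - 1 := fun x hx h ↦ hodd x hx (Int.odd_iff.2 h)
  rw [Int.even_iff] at hEab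
  rw [Int.odd_iff] at hOac hOad
  have := hE _ hAab hEab
  have := hE _ hAcd (by omega)
  have := hO _ hAac hOac
  have := hO _ hAad hOad
  have := hO _ hAbc (by omega)
  have := hO _ hAbd (by omega)
  have hsum_a : a + c + (a + d) = 4 * m - 4 := by omega
  have hsum_b : b + c + (b + d) = 4 * m - 4 := by omega
  exact hab (by linarith)

theorem false_of_pairwise_sums_mem (hodd : ∀ x ∈ A, Odd x → x ≤ 2 * m - 1)
    (heven : ∀ x ∈ A, Even x → x = 2 * m - 2 ∨ x = 2 * m)
    {a b c d : ℤ} (hab : a ≠ b) (hac : a ≠ c) (had : a ≠ d) (hbc : b ≠ c) (hbd : b ≠ d)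
    (hcd : c ≠ d) (hAab : a + b ∈ A) (hAac : a + c ∈ A) (hAad : a + d ∈ A)
    (hAbc : b + c ∈ A) (hAbd : b + d ∈ A) (hAcd : c + d ∈ A) : False := by
  rcases Int.even_or_odd (a + b) with hEab | hOab <;>
    rcases Int.even_or_odd (a + c) with hEac | hOac
  · exact false_of_three_even_sums heven hab hac hbc hAab hAac hAbc hEab hEac
  all_goals rcases Int.even_or_odd (a + d) with hEad | hOad
  · exact false_of_three_even_sums heven hab had hbd hAab hAad hAbd hEab hEad
  · exact false_of_two_even_sums_of_four_odd_sums hodd heven hab hcd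
      hAab hAac hAad hAbc hAbd hAcd hEab hOac hOad
  · exact false_of_three_even_sums heven hac had hcd hAac hAad hAcd hEac hEad
  · exact false_of_two_even_sums_of_four_odd_sums hodd heven hac hbd
      hAac hAab hAad (by rwa [add_comm b c] at hAbc) hAcd hAbd hEac hOab hOad
  · exact false_of_two_even_sums_of_four_odd_sums hodd heven had hbc
      hAad hAab hAac (by rwa [add_comm b d] at hAbd) (by rwa [add_comm c d] at hAcd) hAbc
      hEad hOab hOac
  · have hEbc : Even (b + c) := by
      rw [Int.odd_iff] at hOab hOac
      rw [Int.even_iff]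
      omega
    have hEbd : Even (b + d) := by
      rw [Int.odd_iff] at hOab hOad
      rw [Int.even_iff]
      omega
    exact false_of_three_even_sums heven hbc hbd hcd hAbc hAbd hAcd hEbc hEbd

end SumQuadruple

theorem card_filter_odd_Icc_one_two_mul (n : ℕ) :
    ((Icc (1 : ℤ) (2 * n)).filter (fun x => Odd x)).card = n := by
  have himage : (Icc (1 : ℤ) (2 * n)).filter (fun x => Odd x) =
      (range n).image (fun k : ℕ ↦ 2 * (k : ℤ) + 1) := by
    ext x
    simp only [mem_filter, mem_Icc, mem_image, mem_range, Int.odd_iff]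
    constructor
    · rintro ⟨⟨h1, h2⟩, h3⟩
      exact ⟨((x - 1) / 2).toNat, by omega, by omega⟩
    · rintro ⟨k, hk, rfl⟩
      omega
  rw [himage, card_image_of_injective _ (fun a b h ↦ by simpa using h), card_range]

theorem stmt_5_general (n : ℕ) :
    (((Finset.Icc (1 : ℤ) (2 * (n : ℤ))).filter (fun x => Odd x) ∪
        {2 * (n : ℤ) - 2, 2 * (n : ℤ)}).card = n + 2) ∧
    ¬ ∃ b : Fin 4 → ℤ, Function.Injective b ∧
      ∀ i j : Fin 4, i < j →
        b i + b j ∈ (Finset.Icc (1 : ℤ) (2 * (n : ℤ))).filter (fun x => Odd x) ∪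
          {2 * (n : ℤ) - 2, 2 * (n : ℤ)} := by
  set A : Finset ℤ :=
    (Icc (1 : ℤ) (2 * n)).filter (fun x => Odd x) ∪ {2 * (n : ℤ) - 2, 2 * (n : ℤ)}
  have hmem {x : ℤ} :
      x ∈ A ↔ (1 ≤ x ∧ x ≤ 2 * n) ∧ x % 2 = 1 ∨ x = 2 * n - 2 ∨ x = 2 * n := by
    simp only [A, mem_union, mem_filter, mem_Icc, mem_insert, mem_singleton, Int.odd_iff]
  refine ⟨?_, ?_⟩
  · have hdisj : Disjoint ((Icc (1 : ℤ) (2 * n)).filter (fun x => Odd x))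
        {2 * (n : ℤ) - 2, 2 * (n : ℤ)} := by
      rw [disjoint_left]
      intro x hx hx'
      simp only [mem_filter, Int.odd_iff, mem_insert, mem_singleton] at hx hx'
      omega
    rw [card_union_of_disjoint hdisj, card_filter_odd_Icc_one_two_mul, card_pair (by omega)]
  · rintro ⟨b, hb, hsum⟩
    refine false_of_pairwise_sums_mem (A := A) (m := n) ?_ ?_
      (hb.ne (by decide : (0 : Fin 4) ≠ 1)) (hb.ne (by decide : (0 : Fin 4) ≠ 2))
      (hb.ne (by decide : (0 : Fin 4) ≠ 3)) (hb.ne (by decide : (1 : Fin 4) ≠ 2))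
      (hb.ne (by decide : (1 : Fin 4) ≠ 3)) (hb.ne (by decide : (2 : Fin 4) ≠ 3))
      (hsum 0 1 (by decide)) (hsum 0 2 (by decide)) (hsum 0 3 (by decide))
      (hsum 1 2 (by decide)) (hsum 1 3 (by decide)) (hsum 2 3 (by decide))
    · intro x hx hodd
      rw [mem_coe, hmem] at hx
      have := Int.odd_iff.1 hodd
      omega
    · intro x hx heven
      rw [mem_coe, hmem] at hx
      have := Int.even_iff.1 heven
      omega

theorem stmt_5 (n : ℕ) (hn : 2 ≤ n) :
    (((Finset.Icc (1 : ℤ) (2 * (n : ℤ))).filter (fun x => Odd x) ∪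
        {2 * (n : ℤ) - 2, 2 * (n : ℤ)}).card = n + 2) ∧
    ¬ ∃ b : Fin 4 → ℤ, Function.Injective b ∧
      ∀ i j : Fin 4, i < j →
        b i + b j ∈ (Finset.Icc (1 : ℤ) (2 * (n : ℤ))).filter (fun x => Odd x) ∪
          {2 * (n : ℤ) - 2, 2 * (n : ℤ)} :=
  stmt_5_general n
end

section
/- For all n ≥ 2, g₄(n) = 3, where g₄(n) is the smallest integer g such that every subset A of {1, ..., 2n} with |A| ≥ n + g contains all six pairwise sums of some four distinct integers. -/
/-!
Pair `i ∈ [1, n]` with `2n + 1 - i`. A set of `n + 3` elements of `[1, 2n]` contains three whole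
pairs `{xᵢ, 2n + 1 - xᵢ}`, and these six numbers are the pairwise sums of four distinct integers
once the parity of `x₁ + x₂ - x₃` is adjusted by swapping `x₃` with its partner. Conversely the
`n` odd numbers together with `2n - 2` and `2n` contain no such six sums, by a parity count.
-/

open Finset

def HasPairwiseSums (k : ℕ) (A : Finset ℤ) : Prop :=
  ∃ b : Fin k → ℤ, Function.Injective b ∧ ∀ i j : Fin k, i < j → b i + b j ∈ A

theorem hasPairwiseSums_four_iff {A : Finset ℤ} :
    HasPairwiseSums 4 A ↔ ∃ w x y z : ℤ,
      (w ≠ x ∧ w ≠ y ∧ w ≠ z ∧ x ≠ y ∧ x ≠ z ∧ y ≠ z) ∧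
      (w + x ∈ A ∧ w + y ∈ A ∧ w + z ∈ A ∧ x + y ∈ A ∧ x + z ∈ A ∧ y + z ∈ A) := by
  constructor
  · rintro ⟨b, hb, hsum⟩
    exact ⟨b 0, b 1, b 2, b 3,
      ⟨hb.ne (by decide), hb.ne (by decide), hb.ne (by decide), hb.ne (by decide),
        hb.ne (by decide), hb.ne (by decide)⟩,
      ⟨hsum 0 1 (by decide), hsum 0 2 (by decide), hsum 0 3 (by decide),
        hsum 1 2 (by decide), hsum 1 3 (by decide), hsum 2 3 (by decide)⟩⟩
  · rintro ⟨w, x, y, z, ⟨hwx, hwy, hwz, hxy, hxz, hyz⟩, hsum⟩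
    refine ⟨![w, x, y, z], ?_, ?_⟩
    · intro i j h
      fin_cases i <;> fin_cases j <;> simp_all [eq_comm]
    · intro i j hij
      fin_cases i <;> fin_cases j <;> simp_all

/-- Four numbers whose pairwise sums are `x₁, x₂, c` and `T - c, T - x₂, T - x₁`, where
`c ∈ {x₃, T - x₃}` is the one of the two (of different parity, `T` being odd) making
`x₁ + x₂ - c` even. -/
theorem hasPairwiseSums_four_of_two_lt_card {A S : Finset ℤ} {T : ℤ} (hT : Odd T)
    (hS : 2 < S.card) (hlt : ∀ x ∈ S, 2 * x < T) (hmem : ∀ x ∈ S, x ∈ A ∧ T - x ∈ A) :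
    HasPairwiseSums 4 A := by
  obtain ⟨x₁, hx₁, x₂, hx₂, x₃, hx₃, h₁₂, h₁₃, h₂₃⟩ := two_lt_card.mp hS
  have hc : ∃ c, (c = x₃ ∨ c = T - x₃) ∧ Even (x₁ + x₂ - c) := by
    rcases Int.even_or_odd (x₁ + x₂ - x₃) with h | h
    · exact ⟨x₃, .inl rfl, h⟩
    · refine ⟨T - x₃, .inr rfl, ?_⟩
      rw [show x₁ + x₂ - (T - x₃) = x₁ + x₂ - x₃ - T + 2 * x₃ by ring]
      exact (h.sub_odd hT).add (even_two_mul x₃)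
  obtain ⟨c, hc, m, hm⟩ := hc
  have hcA : c ∈ A ∧ T - c ∈ A := by
    rcases hc with rfl | rfl
    · exact hmem _ hx₃
    · rw [sub_sub_cancel]; exact (hmem _ hx₃).symm
  have := hlt _ hx₁; have := hlt _ hx₂; have := hlt _ hx₃
  refine hasPairwiseSums_four_iff.mpr ⟨m, x₁ - m, x₂ - m, T - c - m, ?_, ?_⟩
  · omega
  · refine ⟨?_, ?_, ?_, ?_, ?_, ?_⟩
    · convert (hmem _ hx₁).1 using 1; ring
    · convert (hmem _ hx₂).1 using 1; ring
    · convert hcA.2 using 1; ring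
    · convert hcA.1 using 1; omega
    · convert (hmem _ hx₂).2 using 1; omega
    · convert (hmem _ hx₁).2 using 1; omega

theorem card_le_add_card_filter_pair_subset (n : ℕ) {A : Finset ℤ}
    (hA : A ⊆ Icc 1 (2 * (n : ℤ))) :
    A.card ≤ n + ((Icc 1 (n : ℤ)).filter (fun i => i ∈ A ∧ 2 * (n : ℤ) + 1 - i ∈ A)).card := by
  set L := (Icc 1 (n : ℤ)).filter (· ∈ A)
  set R := (Icc 1 (n : ℤ)).filter (fun i => 2 * (n : ℤ) + 1 - i ∈ A)
  have hcover : A ⊆ L ∪ R.image (fun i => 2 * (n : ℤ) + 1 - i) := by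
    intro a ha
    have := mem_Icc.mp (hA ha)
    by_cases han : a ≤ n
    · exact mem_union_left _ (mem_filter.mpr ⟨mem_Icc.mpr ⟨this.1, han⟩, ha⟩)
    · refine mem_union_right _ (mem_image.mpr ⟨2 * n + 1 - a, mem_filter.mpr ⟨?_, ?_⟩, ?_⟩)
      · exact mem_Icc.mpr ⟨by omega, by omega⟩
      · rwa [sub_sub_cancel]
      · ring
  calc A.card ≤ L.card + R.card :=
        (card_le_card hcover).trans
          ((card_union_le _ _).trans (Nat.add_le_add_left card_image_le _))
    _ = (L ∪ R).card + (L ∩ R).card := (card_union_add_card_inter L R).symm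
    _ ≤ n + ((Icc 1 (n : ℤ)).filter (fun i => i ∈ A ∧ 2 * (n : ℤ) + 1 - i ∈ A)).card := by
        rw [filter_and]
        gcongr
        calc (L ∪ R).card ≤ (Icc 1 (n : ℤ)).card :=
              card_le_card (union_subset (filter_subset _ _) (filter_subset _ _))
          _ = n := by simp

def oddsWithTopEvens (n : ℕ) : Finset ℤ :=
  (range n).image (fun k : ℕ => 2 * (k : ℤ) + 1) ∪ {2 * (n : ℤ) - 2, 2 * (n : ℤ)}

theorem mem_oddsWithTopEvens {n : ℕ} {x : ℤ} :
    x ∈ oddsWithTopEvens n ↔ (x % 2 = 1 ∧ 1 ≤ x ∧ x < 2 * n) ∨ x = 2 * n - 2 ∨ x = 2 * n := by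
  simp only [oddsWithTopEvens, mem_union, mem_image, mem_range, mem_insert, mem_singleton]
  constructor
  · rintro (⟨k, hk, rfl⟩ | rfl | rfl) <;> omega
  · rintro (⟨h2, h1, hlt⟩ | h | h)
    · exact .inl ⟨(x / 2).toNat, by omega, by omega⟩
    · exact .inr (.inl h)
    · exact .inr (.inr h)

theorem card_oddsWithTopEvens (n : ℕ) : (oddsWithTopEvens n).card = n + 2 := by
  rw [oddsWithTopEvens, card_union_of_disjoint,
    card_image_of_injective _ (fun a b h => by simpa using h), card_range, card_pair (by omega)]
  rw [disjoint_left]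
  intro a ha hb
  simp only [mem_image, mem_range, mem_insert, mem_singleton] at ha hb
  obtain ⟨k, -, rfl⟩ := ha
  omega

theorem oddsWithTopEvens_subset {n : ℕ} (hn : 2 ≤ n) :
    oddsWithTopEvens n ⊆ Icc 1 (2 * (n : ℤ)) := by
  intro x hx
  rw [mem_Icc]
  rcases mem_oddsWithTopEvens.mp hx with h | h | h <;> omega

/-- If three of the four numbers have the same parity, their three even pairwise sums pairwise
share a number, hence are distinct: too many for `{2n - 2, 2n}`. Otherwise `w ≡ x`, `y ≡ z`, say;
the four odd sums are at most `2n - 1` and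
`(w + y) + (x + z) = (w + z) + (x + y) = (w + x) + (y + z)` is at least `4n - 4`, so they lie in
`{2n - 3, 2n - 1}`. Sums sharing a number differ, forcing
`w + z = x + y ≠ w + y = x + z`, against the equality of the two totals. -/
theorem not_hasPairwiseSums_four_oddsWithTopEvens (n : ℕ) :
    ¬ HasPairwiseSums 4 (oddsWithTopEvens n) := by
  rw [hasPairwiseSums_four_iff]
  rintro ⟨w, x, y, z, hne, h₁, h₂, h₃, h₄, h₅, h₆⟩
  simp only [mem_oddsWithTopEvens] at h₁ h₂ h₃ h₄ h₅ h₆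
  omega

theorem stmt_6 (n : ℕ) (hn : 2 ≤ n) :
    (∀ A : Finset ℤ, A ⊆ Finset.Icc 1 (2 * (n : ℤ)) → n + 3 ≤ A.card →
      ∃ b : Fin 4 → ℤ, Function.Injective b ∧
        ∀ i j : Fin 4, i < j → b i + b j ∈ A) ∧
    (∃ A : Finset ℤ, A ⊆ Finset.Icc 1 (2 * (n : ℤ)) ∧ n + 2 ≤ A.card ∧
      ¬ ∃ b : Fin 4 → ℤ, Function.Injective b ∧
        ∀ i j : Fin 4, i < j → b i + b j ∈ A) := by
  refine ⟨fun A hA hcard => ?_, oddsWithTopEvens n, oddsWithTopEvens_subset hn,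
    (card_oddsWithTopEvens n).ge, not_hasPairwiseSums_four_oddsWithTopEvens n⟩
  have hpairs := card_le_add_card_filter_pair_subset n hA
  refine hasPairwiseSums_four_of_two_lt_card (T := 2 * n + 1) ⟨n, rfl⟩
    (Nat.lt_of_add_lt_add_left (hpairs.trans_lt' hcard))
    (fun x hx => ?_) (fun x hx => (mem_filter.mp hx).2)
  have := (mem_Icc.mp (mem_filter.mp hx).1).2
  omega
end

section
/- Let n be a positive integer and let A = {1, 3, ..., 2n-1} ∪ {2, 4, 8, ..., 2^⌊log₂(2n)⌋} be the set of all odd integers in [1, 2n] together with all powers of 2 in [1, 2n]. Then there do not exist five distinct positive integers b₁, ..., b₅ such that all ten pairwise sums bᵢ + bⱼ lie in A. -/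
/-!
Among five integers three have the same parity, so their three pairwise sums are even and hence,
lying in `A`, powers of two. But if `x, y < z` are positive, then `x + z` and `y + z` both lie in
`(z, 2z)`, which contains at most one power of two, so `x = y`.
-/

section PowersOfTwo

variable {R : Type*} [CommSemiring R] [LinearOrder R] [IsStrictOrderedRing R]

theorem eq_of_two_pow_mem_Ioo_two_mul {z : R} {a c : ℕ}
    (ha : (2 : R) ^ a ∈ Set.Ioo z (2 * z)) (hc : (2 : R) ^ c ∈ Set.Ioo z (2 * z)) : a = c := by
  have lt_succ {a c : ℕ} (ha : (2 : R) ^ a ∈ Set.Ioo z (2 * z))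
      (hc : (2 : R) ^ c ∈ Set.Ioo z (2 * z)) : a < c + 1 := by
    rw [← pow_lt_pow_iff_right₀ (one_lt_two : (1 : R) < 2)]
    calc (2 : R) ^ a < 2 * z := ha.2
      _ < 2 * 2 ^ c := by gcongr; exact hc.1
      _ = 2 ^ (c + 1) := (pow_succ' 2 c).symm
  have := lt_succ ha hc
  have := lt_succ hc ha
  omega

theorem Finset.card_le_two_of_add_eq_two_pow {S : Finset R} (hpos : ∀ x ∈ S, 0 < x)
    (hS : ∀ x ∈ S, ∀ y ∈ S, x ≠ y → ∃ m : ℕ, x + y = 2 ^ m) : S.card ≤ 2 := by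
  by_contra! hcard
  have hne : S.Nonempty := Finset.card_pos.mp (by omega)
  set z := S.max' hne
  have hzS : z ∈ S := S.max'_mem hne
  obtain ⟨x, y, hx, hy, hxy⟩ : ∃ x y, x ∈ S.erase z ∧ y ∈ S.erase z ∧ x ≠ y :=
    Finset.one_lt_card_iff.mp (by rw [Finset.card_erase_of_mem hzS]; omega)
  have sum_mem {w : R} (hw : w ∈ S.erase z) : ∃ m : ℕ, w + z = 2 ^ m ∧
      (2 : R) ^ m ∈ Set.Ioo z (2 * z) := by
    obtain ⟨hwz, hwS⟩ := Finset.mem_erase.mp hw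
    have hw_lt : w < z := lt_of_le_of_ne (S.le_max' w hwS) hwz
    obtain ⟨m, hm⟩ := hS w hwS z hzS hwz
    refine ⟨m, hm, hm ▸ ⟨lt_add_of_pos_left z (hpos w hwS), ?_⟩⟩
    rw [two_mul]
    exact add_lt_add_left hw_lt z
  obtain ⟨a, hxa, ha⟩ := sum_mem hx
  obtain ⟨c, hyc, hc⟩ := sum_mem hy
  rw [eq_of_two_pow_mem_Ioo_two_mul ha hc, ← hyc] at hxa
  exact hxy (add_right_cancel hxa)

end PowersOfTwo

theorem stmt_7_general (n : ℕ) :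
    ¬ ∃ b : Fin 5 → ℤ, Function.Injective b ∧ (∀ i, 0 < b i) ∧
      ∀ i j : Fin 5, i < j →
        b i + b j ∈ {x : ℤ | 1 ≤ x ∧ x ≤ 2 * (n : ℤ) ∧
          (Odd x ∨ ∃ m : ℕ, x = 2 ^ m)} := by
  rintro ⟨b, hinj, hpos, hsum⟩
  obtain ⟨p, hp⟩ := Fintype.exists_lt_card_fiber_of_mul_lt_card (fun i => decide (Even (b i)))
    (n := 2) (by simp)
  set S := (Finset.univ.filter fun i => decide (Even (b i)) = p).image b
  refine absurd (Finset.card_le_two_of_add_eq_two_pow (S := S) ?_ ?_)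
    (by rwa [Finset.card_image_of_injective _ hinj, not_le])
  · simp only [S, Finset.mem_image]
    rintro _ ⟨i, -, rfl⟩
    exact hpos i
  · simp only [S, Finset.mem_image, Finset.mem_filter, Finset.mem_univ, true_and]
    rintro _ ⟨i, hi, rfl⟩ _ ⟨j, hj, rfl⟩ hij
    have heven : Even (b i + b j) := Int.even_add.mpr (by simpa [← hj] using hi)
    have hmem : Odd (b i + b j) ∨ ∃ m : ℕ, b i + b j = 2 ^ m := by
      rcases lt_or_gt_of_ne (ne_of_apply_ne b hij) with h | h
      · exact (hsum i j h).2.2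
      · exact add_comm (b j) (b i) ▸ (hsum j i h).2.2
    exact hmem.resolve_left (Int.not_odd_iff_even.mpr heven)

theorem stmt_7 (n : ℕ) (hn : 1 ≤ n) :
    ¬ ∃ b : Fin 5 → ℤ, Function.Injective b ∧ (∀ i, 0 < b i) ∧
      ∀ i j : Fin 5, i < j →
        b i + b j ∈ {x : ℤ | 1 ≤ x ∧ x ≤ 2 * (n : ℤ) ∧
          (Odd x ∨ ∃ m : ℕ, x = 2 ^ m)} :=
  stmt_7_general n
end

section
/- For every n, the set A of odd integers in [1,2n] together with powers of 2 in [1,2n] satisfies |A| > n + log₂(n), and hence h₅(n) > log₂(n), where h₅(n) is the smallest integer h such that every A ⊆ {1,...,2n} with |A| ≥ n + h contains all ten pairwise sums of five distinct positive integers. -/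
/-!
The odd numbers in `[1, 2n]` together with the powers `2, 4, …, 2 ^ (⌊log₂ n⌋ + 1)` already give
more than `n + log₂ n` elements. Among five distinct integers three have the same parity, so their
pairwise sums are even elements of this set, i.e. powers of two. This is impossible: if `z` is the
largest of the three, the sums of the other two with `z` are distinct and lie in `[z, 2z)`, which
contains at most one power of two.
-/

open Finset Function

lemma Nat.eq_of_two_pow_mem_Ico {z a b : ℕ} (ha : 2 ^ a ∈ Set.Ico z (2 * z))
    (hb : 2 ^ b ∈ Set.Ico z (2 * z)) : a = b := by
  have le_of_mem {a b : ℕ} (ha : 2 ^ a ∈ Set.Ico z (2 * z)) (hb : 2 ^ b ∈ Set.Ico z (2 * z)) :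
      a ≤ b := by
    have : 2 ^ a < 2 ^ (b + 1) := by rw [pow_succ]; linarith [ha.2, hb.1]
    exact Nat.lt_succ_iff.1 ((Nat.pow_lt_pow_iff_right (by norm_num)).1 this)
  exact le_antisymm (le_of_mem ha hb) (le_of_mem hb ha)

theorem Finset.card_le_two_of_pairwise_add_eq_two_pow {s : Finset ℕ}
    (hs : ∀ x ∈ s, ∀ y ∈ s, x ≠ y → ∃ m, x + y = 2 ^ m) : #s ≤ 2 := by
  by_contra! hcard
  have hne : s.Nonempty := card_pos.1 (by omega)
  set z := s.max' hne
  obtain ⟨x, hx, y, hy, hxy⟩ := one_lt_card.1 (show 1 < #(s.erase z) by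
    rw [card_erase_of_mem (max'_mem s hne)]; omega)
  have lt_max {w} (hw : w ∈ s.erase z) : w < z :=
    (le_max' s w (mem_of_mem_erase hw)).lt_of_ne (ne_of_mem_erase hw)
  obtain ⟨a, ha⟩ := hs x (mem_of_mem_erase hx) z (max'_mem s hne) (lt_max hx).ne
  obtain ⟨b, hb⟩ := hs y (mem_of_mem_erase hy) z (max'_mem s hne) (lt_max hy).ne
  have hab : a = b := Nat.eq_of_two_pow_mem_Ico (z := z)
    ⟨by omega, by linarith [lt_max hx]⟩ ⟨by omega, by linarith [lt_max hy]⟩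
  subst hab
  exact hxy (by omega)

theorem Fintype.card_le_four_of_pairwise_add_mem {ι : Type*} [Fintype ι] {A : Set ℕ}
    (hA : ∀ x ∈ A, Even x → ∃ m, x = 2 ^ m) {b : ι → ℕ} (hb : Injective b)
    (hsum : ∀ i j, i ≠ j → b i + b j ∈ A) : Fintype.card ι ≤ 4 := by
  by_contra! hι
  obtain ⟨p, hp⟩ := Fintype.exists_lt_card_fiber_of_mul_lt_card
    (f := fun i => decide (Even (b i))) (n := 2) (by simpa using hι)
  have := card_le_two_of_pairwise_add_eq_two_pow
    (s := (univ.filter fun i => decide (Even (b i)) = p).image b) ?_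
  · rw [card_image_of_injective _ hb] at this; omega
  simp only [mem_image, mem_filter, mem_univ, true_and]
  rintro _ ⟨i, hi, rfl⟩ _ ⟨j, hj, rfl⟩ hij
  exact hA _ (hsum i j (ne_of_apply_ne b hij))
    (Nat.even_add.2 (decide_eq_decide.1 (hi.trans hj.symm)))

section

-- Classical, so that the decidability instance of the filter is the one in `stmt_8`.
open scoped Classical

noncomputable def oddOrTwoPow (n : ℕ) : Finset ℕ :=
  (Icc 1 (2 * n)).filter (fun x => Odd x ∨ ∃ m ∈ range (2 * n + 1), x = 2 ^ m)

lemma mem_oddOrTwoPow {n x : ℕ} :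
    x ∈ oddOrTwoPow n ↔ x ∈ Icc 1 (2 * n) ∧ (Odd x ∨ ∃ m ∈ range (2 * n + 1), x = 2 ^ m) := by
  simp only [oddOrTwoPow, mem_filter]

lemma exists_eq_two_pow_of_mem_oddOrTwoPow {n x : ℕ} (hx : x ∈ oddOrTwoPow n) (heven : Even x) :
    ∃ m, x = 2 ^ m := by
  rcases (mem_oddOrTwoPow.1 hx).2 with hodd | ⟨m, -, hm⟩
  · exact absurd heven (Nat.not_even_iff_odd.2 hodd)
  · exact ⟨m, hm⟩

lemma card_oddOrTwoPow {n : ℕ} (hn : 1 ≤ n) : n + Nat.log 2 n + 1 ≤ #(oddOrTwoPow n) := by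
  set L := Nat.log 2 n
  have hL : 2 ^ (L + 1) ≤ 2 * n := by
    rw [pow_succ']; exact Nat.mul_le_mul_left 2 (Nat.pow_log_le_self 2 (by omega))
  set odds := (range n).image (fun i => 2 * i + 1)
  set pows := (range (L + 1)).image (fun j => 2 ^ (j + 1))
  have hodds : #odds = n := by
    rw [card_image_of_injective _ (fun i j hij => by omega), card_range]
  have hpows : #pows = L + 1 := by
    rw [card_image_of_injective _ fun i j hij => by simpa using Nat.pow_right_injective le_rfl hij,
      card_range]
  have hdisj : Disjoint odds pows := by
    simp only [odds, pows, disjoint_left, mem_image, mem_range]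
    rintro _ ⟨i, -, rfl⟩ ⟨j, -, hj⟩
    rw [pow_succ'] at hj; omega
  have hsub : odds ∪ pows ⊆ oddOrTwoPow n := by
    intro x hx
    simp only [mem_oddOrTwoPow, odds, pows, mem_union, mem_image, mem_range, mem_Icc] at hx ⊢
    rcases hx with ⟨i, hi, rfl⟩ | ⟨j, hj, rfl⟩
    · exact ⟨by omega, Or.inl (odd_two_mul_add_one i)⟩
    · have : 2 ^ (j + 1) ≤ 2 ^ (L + 1) := Nat.pow_le_pow_right (by norm_num) hj
      have := Nat.lt_two_pow_self (n := j + 1)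
      exact ⟨⟨Nat.one_le_two_pow, by omega⟩, Or.inr ⟨j + 1, by omega, rfl⟩⟩
  calc n + L + 1 = #(odds ∪ pows) := by rw [card_union_of_disjoint hdisj, hodds, hpows]; ring
    _ ≤ #(oddOrTwoPow n) := card_le_card hsub

end

open scoped Classical in
theorem stmt_8 (n : ℕ) (hn : 1 ≤ n) :
    ((((Finset.Icc 1 (2 * n)).filter
        (fun x => Odd x ∨ ∃ m ∈ Finset.range (2 * n + 1), x = 2 ^ m)).card : ℝ) >
      (n : ℝ) + Real.logb 2 n) ∧
    (∀ h : ℕ,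
      (∀ A : Finset ℕ, A ⊆ Finset.Icc 1 (2 * n) → n + h ≤ A.card →
        ∃ b : Fin 5 → ℕ, Function.Injective b ∧ (∀ i, 0 < b i) ∧
          ∀ i j : Fin 5, i < j → b i + b j ∈ A) →
      (h : ℝ) > Real.logb 2 n) := by
  have hcard := card_oddOrTwoPow hn
  have hlog : Real.logb 2 n < Nat.log 2 n + 1 := by
    have := Nat.lt_floor_add_one (Real.logb 2 n)
    rwa [← Nat.cast_ofNat, Real.natFloor_logb_natCast] at this
  refine ⟨?_, fun h hA => ?_⟩
  · change (n : ℝ) + Real.logb 2 n < #(oddOrTwoPow n)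
    have : ((n + Nat.log 2 n + 1 : ℕ) : ℝ) ≤ #(oddOrTwoPow n) := by exact_mod_cast hcard
    push_cast at this; linarith
  by_contra! hh
  have hhL : h ≤ Nat.log 2 n := by rw [← Real.natFloor_logb_natCast]; exact Nat.le_floor hh
  obtain ⟨b, hb, -, hsum⟩ := hA (oddOrTwoPow n) (fun x hx => (mem_oddOrTwoPow.1 hx).1) (by omega)
  have := Fintype.card_le_four_of_pairwise_add_mem (A := ↑(oddOrTwoPow n))
    (fun x hx => exists_eq_two_pow_of_mem_oddOrTwoPow hx) hb fun i j hij => by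
      rcases hij.lt_or_gt with hij | hij
      · exact hsum i j hij
      · rw [add_comm]; exact hsum j i hij
  simp at this
end

section
/- For every k ≥ 3 and every real x ≥ 1, the functions defined by f₃(x) = √(x/2) + (x/2)^(1/4) + 1/2 and fₖ(x) = √(2x·f_{k-1}(x) + 1/4) + 1/2 for k ≥ 4 satisfy 2·fₖ(x) > fₖ(2x). -/
noncomputable def f : ℕ → ℝ → ℝ
  | k + 4, x => Real.sqrt (2 * x * f (k + 3) x + 1 / 4) + 1 / 2
  | _, x => Real.sqrt (x / 2) + (x / 2) ^ ((1 : ℝ) / 4) + 1 / 2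

/-
Induction on `k`, for all `x ≥ 0`. For `k = 3` the inequality holds termwise, since
`(2y)^p ≤ 2 y^p` for `p ≤ 1`. In the step even `f k (2x) ≤ 2 f k x` gives
`2·(2x)·f k (2x) + 1/4 ≤ 4 (2x f k x + 1/4)`, so the square root in `f (k+1) (2x)` is at most
twice the one in `f (k+1) x`, and the constant `1/2 < 2 · 1/2` makes the inequality strict.
-/

open Real

lemma rpow_mul_le_mul_rpow {c y p : ℝ} (hc : 1 ≤ c) (hy : 0 ≤ y) (hp : p ≤ 1) :
    (c * y) ^ p ≤ c * y ^ p := by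
  rw [mul_rpow (by linarith) hy]
  have hcp : c ^ p ≤ c := by
    simpa using rpow_le_rpow_of_exponent_le hc hp
  exact mul_le_mul_of_nonneg_right hcp (rpow_nonneg hy p)

lemma sqrt_two_mul_le {y : ℝ} (hy : 0 ≤ y) : √(2 * y) ≤ 2 * √y := by
  simpa only [sqrt_eq_rpow] using rpow_mul_le_mul_rpow one_le_two hy (by norm_num)

lemma sqrt_step_lt {x a b : ℝ} (hx : 0 ≤ x) (hba : b ≤ 2 * a) :
    √(2 * (2 * x) * b + 1 / 4) + 1 / 2 < 2 * (√(2 * x * a + 1 / 4) + 1 / 2) := by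
  have hsqrt : √(2 * (2 * x) * b + 1 / 4) ≤ 2 * √(2 * x * a + 1 / 4) :=
    calc √(2 * (2 * x) * b + 1 / 4) ≤ √(4 * (2 * x * a + 1 / 4)) :=
          sqrt_le_sqrt (by nlinarith)
      _ = 2 * √(2 * x * a + 1 / 4) := by
          rw [sqrt_mul (by norm_num), show (4 : ℝ) = 2 ^ 2 by norm_num, sqrt_sq two_pos.le]
  linarith

lemma f_three (x : ℝ) : f 3 x = √(x / 2) + (x / 2) ^ ((1 : ℝ) / 4) + 1 / 2 :=
  rfl

lemma f_add_four (k : ℕ) (x : ℝ) : f (k + 4) x = √(2 * x * f (k + 3) x + 1 / 4) + 1 / 2 :=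
  rfl

lemma f_three_two_mul_lt {x : ℝ} (hx : 0 ≤ x) : f 3 (2 * x) < 2 * f 3 x := by
  have hx2 : 0 ≤ x / 2 := by linarith
  have hsqrt : √(2 * x / 2) ≤ 2 * √(x / 2) := by
    simpa only [mul_div_assoc] using sqrt_two_mul_le hx2
  have hroot : (2 * x / 2) ^ ((1 : ℝ) / 4) ≤ 2 * (x / 2) ^ ((1 : ℝ) / 4) := by
    simpa only [mul_div_assoc] using
      rpow_mul_le_mul_rpow one_le_two hx2 (by norm_num)
  rw [f_three, f_three]
  linarith

lemma f_add_three_two_mul_lt (k : ℕ) {x : ℝ} (hx : 0 ≤ x) :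
    f (k + 3) (2 * x) < 2 * f (k + 3) x := by
  induction k with
  | zero => exact f_three_two_mul_lt hx
  | succ k ih =>
    rw [show k + 1 + 3 = k + 4 by omega, f_add_four, f_add_four]
    exact sqrt_step_lt hx ih.le

theorem stmt_15 (k : ℕ) (hk : 3 ≤ k) (x : ℝ) (hx : 1 ≤ x) :
    2 * f k x > f k (2 * x) := by
  obtain ⟨m, rfl⟩ := Nat.exists_eq_add_of_le' hk
  exact f_add_three_two_mul_lt m (by linarith)
end

section
/- For every k ≥ 3 and every real x ≥ 1, the functions defined by f₃(x) = √(x/2) + (x/2)^(1/4) + 1/2 and fₖ(x) = √(2x·f_{k-1}(x) + 1/4) + 1/2 for k ≥ 4 satisfy fₖ(x) ≤ 2^(1 - 3/2^(k-2)) · x^(1 - 1/2^(k-2)) + 2·x^(1 - 3/2^(k-1)). -/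
/-!
Write the bound as `a_k + b_k` with `a_k = 2^(1 - 3/2^(k-2)) x^(1 - 1/2^(k-2))` and
`b_k = 2 x^(1 - 3/2^(k-1))`. Halving the exponent gaps squares the terms up to a factor `2x`:
`a_{k+1}² = 2x a_k` and `b_{k+1}² = 2x b_k`. Hence, by induction,
`2x f_k + 1/4 ≤ a_{k+1}² + b_{k+1}² + 1/4 ≤ (a_{k+1} + b_{k+1} - 1/2)²`,
the last step because `a_{k+1}, b_{k+1} ≥ 1`; taking square roots gives `f_{k+1} ≤ a_{k+1} + b_{k+1}`.
-/

open Real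

namespace Stmt16

noncomputable def leadTerm (p x : ℝ) : ℝ := 2 ^ (1 - 3 / p) * x ^ (1 - 1 / p)

noncomputable def tailTerm (p x : ℝ) : ℝ := 2 * x ^ (1 - 3 / p)

lemma rpow_one_sub_div_mul_two_sq {c : ℝ} (hc : 0 < c) (s p : ℝ) :
    (c ^ (1 - s / (p * 2))) ^ 2 = c * c ^ (1 - s / p) := by
  rw [sq, ← rpow_add hc, show 1 - s / (p * 2) + (1 - s / (p * 2)) = 1 + (1 - s / p) by ring,
    rpow_add hc, rpow_one]

lemma leadTerm_mul_two_sq {x : ℝ} (hx : 0 < x) (p : ℝ) :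
    leadTerm (p * 2) x ^ 2 = 2 * x * leadTerm p x := by
  simp only [leadTerm, mul_pow, rpow_one_sub_div_mul_two_sq two_pos,
    rpow_one_sub_div_mul_two_sq hx]
  ring

lemma tailTerm_mul_two_sq {x : ℝ} (hx : 0 < x) (p : ℝ) :
    tailTerm (p * 2) x ^ 2 = 2 * x * tailTerm p x := by
  simp only [tailTerm, mul_pow, rpow_one_sub_div_mul_two_sq hx]
  ring

lemma one_le_leadTerm {p x : ℝ} (hp : 3 ≤ p) (hx : 1 ≤ x) : 1 ≤ leadTerm p x := by
  have hp0 : 0 < p := by linarith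
  have h2 : (1 : ℝ) ≤ 2 ^ (1 - 3 / p) :=
    one_le_rpow one_le_two (sub_nonneg.2 ((div_le_one hp0).2 hp))
  have hx' : 1 ≤ x ^ (1 - 1 / p) :=
    one_le_rpow hx (sub_nonneg.2 ((div_le_one hp0).2 (by linarith)))
  exact one_le_mul_of_one_le_of_one_le h2 hx'

lemma one_le_tailTerm {p x : ℝ} (hp : 3 ≤ p) (hx : 1 ≤ x) : 1 ≤ tailTerm p x := by
  have hx' : 1 ≤ x ^ (1 - 3 / p) :=
    one_le_rpow hx (sub_nonneg.2 ((div_le_one (by linarith)).2 hp))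
  unfold tailTerm
  linarith

lemma sqrt_add_quarter_add_half_le {y a b : ℝ} (ha : 1 ≤ a) (hb : 1 ≤ b)
    (hy : y ≤ a ^ 2 + b ^ 2) : √(y + 1 / 4) + 1 / 2 ≤ a + b := by
  have hsq : y + 1 / 4 ≤ (a + b - 1 / 2) ^ 2 := by
    nlinarith [mul_nonneg (sub_nonneg.2 ha) (sub_nonneg.2 hb)]
  have hs : √(y + 1 / 4) ≤ a + b - 1 / 2 :=
    sqrt_le_iff.2 ⟨by linarith, hsq⟩
  linarith

lemma f_three_le {x : ℝ} (hx : 1 ≤ x) : f 3 x ≤ leadTerm 2 x + tailTerm 4 x := by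
  have hx0 : 0 ≤ x := by linarith
  have hsqrt : √(x / 2) = 2 ^ (1 - 3 / 2 : ℝ) * x ^ (1 - 1 / 2 : ℝ) := by
    rw [sqrt_eq_rpow, div_rpow hx0 two_pos.le, div_eq_mul_inv, ← rpow_neg two_pos.le,
      show (1 - 3 / 2 : ℝ) = -(1 / 2) by norm_num, show (1 - 1 / 2 : ℝ) = 1 / 2 by norm_num]
    ring
  have hquarter : (x / 2) ^ (1 / 4 : ℝ) ≤ x ^ (1 - 3 / 4 : ℝ) := by
    rw [show (1 - 3 / 4 : ℝ) = 1 / 4 by norm_num]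
    exact rpow_le_rpow (by positivity) (by linarith) (by norm_num)
  have hone : 1 ≤ x ^ (1 - 3 / 4 : ℝ) := one_le_rpow hx (by norm_num)
  simp only [f, leadTerm, tailTerm]
  linarith

lemma f_add_three_le (n : ℕ) {x : ℝ} (hx : 1 ≤ x) :
    f (n + 3) x ≤ leadTerm (2 ^ (n + 1)) x + tailTerm (2 ^ (n + 2)) x := by
  have hx0 : 0 < x := by linarith
  induction n with
  | zero => simpa only [zero_add, pow_one, show (2 : ℝ) ^ 2 = 4 by norm_num] using f_three_le hx
  | succ n ih =>
    have hp : (3 : ℝ) ≤ 2 ^ (n + 2) := by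
      calc (3 : ℝ) ≤ 2 ^ 2 := by norm_num
        _ ≤ 2 ^ (n + 2) := pow_le_pow_right₀ one_le_two (by omega)
    have hp' : (3 : ℝ) ≤ 2 ^ (n + 3) := hp.trans (pow_le_pow_right₀ one_le_two (by omega))
    show √(2 * x * f (n + 3) x + 1 / 4) + 1 / 2 ≤ _
    refine sqrt_add_quarter_add_half_le (one_le_leadTerm hp hx) (one_le_tailTerm hp' hx) ?_
    rw [pow_succ 2 (n + 1), show (2 : ℝ) ^ (n + 1 + 2) = 2 ^ (n + 2) * 2 from pow_succ 2 (n + 2),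
      leadTerm_mul_two_sq hx0, tailTerm_mul_two_sq hx0, ← mul_add]
    exact mul_le_mul_of_nonneg_left ih (by positivity)

end Stmt16

open Stmt16 in
theorem stmt_16 (k : ℕ) (hk : 3 ≤ k) (x : ℝ) (hx : 1 ≤ x) :
    f k x ≤ (2 : ℝ) ^ ((1 : ℝ) - 3 / (2 : ℝ) ^ (k - 2)) *
        x ^ ((1 : ℝ) - 1 / (2 : ℝ) ^ (k - 2)) +
      2 * x ^ ((1 : ℝ) - 3 / (2 : ℝ) ^ (k - 1)) := by
  obtain ⟨n, rfl⟩ := Nat.exists_eq_add_of_le' hk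
  simpa only [leadTerm, tailTerm, show n + 3 - 2 = n + 1 by omega,
    show n + 3 - 1 = n + 2 by omega] using f_add_three_le n hx
end

section
/- For the set A = {1, 2, 4, 5, 6, 7, 8, 9, 10} ⊆ {1, ..., 10} (so n = 5 and |A| = n + 4), there do not exist five distinct integers b₁, ..., b₅ with all ten pairwise sums in A; hence g₅(5) ≥ 5. -/
/-! After sorting, `c₀ < c₁ < c₂ < c₃ < c₄`, so the pairwise sums obey the order relations forced
by the sorting; together with `1 ≤ cᵢ + cⱼ ≤ 10` and `cᵢ + cⱼ ≠ 3` these linear constraints have no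
integer solution. Since `A` has nine elements and lies in `[1, 10]`, any `g` for which every
`(5 + g)`-element subset of `[1, 10]` carries such a quintuple must exceed `4`. -/

lemma Function.Injective.exists_strictMono_add_mem {α : Type*} [LinearOrder α] [AddCommMagma α]
    {n : ℕ} {b : Fin n → α} {S : Set α} (hb : Function.Injective b)
    (hS : ∀ i j, i < j → b i + b j ∈ S) :
    ∃ c : Fin n → α, StrictMono c ∧ ∀ i j, i ≠ j → c i + c j ∈ S := by
  have hS' : ∀ i j, i ≠ j → b i + b j ∈ S := by
    intro i j hij
    rcases hij.lt_or_gt with h | h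
    · exact hS i j h
    · rw [add_comm]; exact hS j i h
  refine ⟨b ∘ Tuple.sort b, (Tuple.monotone_sort b).strictMono_of_injective
    (hb.comp (Tuple.sort b).injective), fun i j hij => hS' _ _ ?_⟩
  exact (Tuple.sort b).injective.ne hij

lemma not_strictMono_pairwise_add_mem (c : Fin 5 → ℤ) (hc : StrictMono c) :
    ¬ ∀ i j, i ≠ j → c i + c j ∈ ({1, 2, 4, 5, 6, 7, 8, 9, 10} : Finset ℤ) := by
  intro hsum
  have bounds : ∀ i j, i ≠ j → 1 ≤ c i + c j ∧ c i + c j ≤ 10 ∧ c i + c j ≠ 3 := by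
    intro i j hij
    have h := hsum i j hij
    generalize c i + c j = s at h ⊢
    fin_cases h <;> omega
  have h01 := bounds 0 1 (by decide)
  have h02 := bounds 0 2 (by decide)
  have h03 := bounds 0 3 (by decide)
  have h12 := bounds 1 2 (by decide)
  have h13 := bounds 1 3 (by decide)
  have h23 := bounds 2 3 (by decide)
  have h34 := bounds 3 4 (by decide)
  have l01 : c 0 < c 1 := hc (by decide)
  have l12 : c 1 < c 2 := hc (by decide)
  have l23 : c 2 < c 3 := hc (by decide)
  have l34 : c 3 < c 4 := hc (by decide)
  omega

lemma not_exists_injective_pairwise_add_mem :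
    ¬ ∃ b : Fin 5 → ℤ, Function.Injective b ∧
      ∀ i j : Fin 5, i < j → b i + b j ∈ ({1, 2, 4, 5, 6, 7, 8, 9, 10} : Finset ℤ) := by
  rintro ⟨b, hb, hsum⟩
  obtain ⟨c, hc, hcsum⟩ := hb.exists_strictMono_add_mem (S := {x | x ∈ _}) hsum
  exact not_strictMono_pairwise_add_mem c hc hcsum

theorem stmt_18 :
    (¬ ∃ b : Fin 5 → ℤ, Function.Injective b ∧
      ∀ i j : Fin 5, i < j →
        b i + b j ∈ ({1, 2, 4, 5, 6, 7, 8, 9, 10} : Finset ℤ)) ∧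
    (∀ g : ℕ,
      (∀ A : Finset ℤ, A ⊆ Finset.Icc 1 10 → 5 + g ≤ A.card →
        ∃ b : Fin 5 → ℤ, Function.Injective b ∧
          ∀ i j : Fin 5, i < j → b i + b j ∈ A) →
      5 ≤ g) := by
  refine ⟨not_exists_injective_pairwise_add_mem, fun g hg => ?_⟩
  by_contra! hlt
  have hsub : ({1, 2, 4, 5, 6, 7, 8, 9, 10} : Finset ℤ) ⊆ Finset.Icc 1 10 := by decide
  have hcard : ({1, 2, 4, 5, 6, 7, 8, 9, 10} : Finset ℤ).card = 9 := by decide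
  exact not_exists_injective_pairwise_add_mem (hg _ hsub (by omega))
end

section
/- Let Sid = {a₁, ..., a_r} ⊆ {1, ..., ⌊n/2⌋} be a Sidon set and let A = {1, 3, ..., 2n-1} ∪ {4a₁ - 2, 4a₂ - 2, ..., 4a_r - 2}. Then there do not exist six distinct integers b₁, ..., b₆ such that all fifteen pairwise sums bᵢ + bⱼ (1 ≤ i < j ≤ 6) lie in A. -/
/-!
Every element of `A` is odd or `≡ 2 (mod 4)`, so no two of the `bᵢ` have a sum divisible by `4`.
Hence at most one `bᵢ` is `≡ 0` and at most one is `≡ 2 (mod 4)`, and the residues `1` and `3` do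
not both occur: at least four of the `bᵢ` share one odd residue. Their pairwise sums are
`≡ 2 (mod 4)`, so they lie in the Sidon set `{4a - 2 | a ∈ Sid}`, and the identity
`(b₁ + b₂) + (b₃ + b₄) = (b₁ + b₃) + (b₂ + b₄)` forces two of these four `bᵢ` to coincide.
-/

open Finset

def IsSidonSet {α : Type*} [Add α] (B : Set α) : Prop :=
  ∀ a ∈ B, ∀ b ∈ B, ∀ c ∈ B, ∀ d ∈ B, a + b = c + d → (a = c ∧ b = d) ∨ (a = d ∧ b = c)

theorem IsSidonSet.image_natCast_mul_sub {S : Set ℕ} (hS : IsSidonSet S) {c : ℤ} (hc : c ≠ 0)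
    (d : ℤ) : IsSidonSet ((fun a : ℕ => c * a - d) '' S) := by
  rintro _ ⟨a, ha, rfl⟩ _ ⟨b, hb, rfl⟩ _ ⟨a', ha', rfl⟩ _ ⟨b', hb', rfl⟩ h
  have hsum : a + b = a' + b' := by
    have : c * ((a : ℤ) + b) = c * ((a' : ℤ) + b') := by linarith
    exact_mod_cast mul_left_cancel₀ hc this
  rcases hS a ha b hb a' ha' b' hb' hsum with ⟨rfl, rfl⟩ | ⟨rfl, rfl⟩
  · exact .inl ⟨rfl, rfl⟩
  · exact .inr ⟨rfl, rfl⟩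

theorem IsSidonSet.eq_or_eq_of_add_mem {α : Type*} [AddCancelCommMonoid α] {B : Set α}
    (hB : IsSidonSet B) {w x y z : α} (hwx : w + x ∈ B) (hyz : y + z ∈ B) (hwy : w + y ∈ B)
    (hxz : x + z ∈ B) : x = y ∨ w = z := by
  refine (hB _ hwx _ hyz _ hwy _ hxz (by abel)).imp (fun h => add_left_cancel h.1) fun h => ?_
  exact add_right_cancel (h.1.trans (add_comm x z))

theorem card_filter_emod_four_le_one {ι : Type*} [Fintype ι] {b : ι → ℤ}
    (hb : ∀ i j, i ≠ j → ¬ 4 ∣ b i + b j) {r : ℤ} (hr : 4 ∣ r + r) :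
    #{i | b i % 4 = r} ≤ 1 := by
  refine card_le_one.2 fun i hi j hj => ?_
  rw [mem_filter] at hi hj
  by_contra hij
  exact hb i j hij (by omega)

theorem exists_odd_card_le_card_filter_emod_four {ι : Type*} [Fintype ι] {b : ι → ℤ}
    (hb : ∀ i j, i ≠ j → ¬ 4 ∣ b i + b j) :
    ∃ r : ℤ, Odd r ∧ Fintype.card ι ≤ #{i | b i % 4 = r} + 2 := by
  have hfib : #(univ : Finset ι) = ∑ r ∈ Ico (0 : ℤ) 4, #{i | b i % 4 = r} :=
    card_eq_sum_card_fiberwise (f := fun i => b i % 4) fun i _ => by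
      simp only [coe_Ico, Set.mem_Ico]; omega
  have h0 := card_filter_emod_four_le_one hb (r := 0) (by norm_num)
  have h2 := card_filter_emod_four_le_one hb (r := 2) (by norm_num)
  have h13 : #{i | b i % 4 = 1} = 0 ∨ #{i | b i % 4 = 3} = 0 := by
    by_contra! h
    obtain ⟨i, hi⟩ := card_pos.1 (Nat.pos_of_ne_zero h.1)
    obtain ⟨j, hj⟩ := card_pos.1 (Nat.pos_of_ne_zero h.2)
    rw [mem_filter] at hi hj
    exact hb i j (by rintro rfl; omega) (by omega)
  rw [card_univ, show Ico (0 : ℤ) 4 = {0, 1, 2, 3} by decide, sum_insert (by decide),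
    sum_insert (by decide), sum_insert (by decide), sum_singleton] at hfib
  rcases h13 with h | h
  · exact ⟨3, by decide, by omega⟩
  · exact ⟨1, by decide, by omega⟩

theorem stmt_19_general (n : ℕ) (S : Finset ℕ)
    (hSidon : ∀ a ∈ S, ∀ b ∈ S, ∀ c ∈ S, ∀ d ∈ S,
      a + b = c + d → (a = c ∧ b = d) ∨ (a = d ∧ b = c)) :
    ¬ ∃ b : Fin 6 → ℤ, Function.Injective b ∧
      ∀ i j : Fin 6, i < j →
        b i + b j ∈ {x : ℤ | (1 ≤ x ∧ x ≤ 2 * (n : ℤ) ∧ Odd x) ∨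
          ∃ a ∈ S, x = 4 * (a : ℤ) - 2} := by
  rintro ⟨b, hinj, hsum⟩
  set B := (fun a : ℕ => 4 * (a : ℤ) - 2) '' S
  have hB : IsSidonSet B := IsSidonSet.image_natCast_mul_sub hSidon four_ne_zero 2
  have hA : ∀ i j, i ≠ j → Odd (b i + b j) ∨ b i + b j ∈ B := by
    have hlt : ∀ i j, i < j → Odd (b i + b j) ∨ b i + b j ∈ B := fun i j h =>
      (hsum i j h).imp (·.2.2) fun ⟨a, ha, hx⟩ => ⟨a, ha, hx.symm⟩
    intro i j hij
    rcases hij.lt_or_gt with h | h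
    · exact hlt i j h
    · exact add_comm (b j) (b i) ▸ hlt j i h
  have hdvd : ∀ i j, i ≠ j → ¬ 4 ∣ b i + b j := by
    intro i j hij
    rcases hA i j hij with ⟨k, hk⟩ | ⟨a, -, ha : 4 * (a : ℤ) - 2 = _⟩ <;> omega
  obtain ⟨r, ⟨k, rfl⟩, hcard⟩ := exists_odd_card_le_card_filter_emod_four hdvd
  have h4 : 4 ≤ #{i | b i % 4 = 2 * k + 1} := by simpa using hcard
  obtain ⟨e, he⟩ : ∃ e : Fin 4 ↪ Fin 6, ∀ p, b (e p) % 4 = 2 * k + 1 :=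
    ⟨(orderEmbOfCardLe _ h4).toEmbedding, fun p => (mem_filter.1 (orderEmbOfCardLe_mem _ h4 p)).2⟩
  have hmem : ∀ p q, p ≠ q → b (e p) + b (e q) ∈ B := by
    intro p q hpq
    have hp := he p
    have hq := he q
    refine (hA _ _ (e.injective.ne hpq)).resolve_left ?_
    rintro ⟨m, hm⟩
    omega
  rcases hB.eq_or_eq_of_add_mem (hmem 0 1 (by decide)) (hmem 2 3 (by decide))
    (hmem 0 2 (by decide)) (hmem 1 3 (by decide)) with h | h <;>
    exact absurd (e.injective (hinj h)) (by decide)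

theorem stmt_19 (n : ℕ) (S : Finset ℕ) (hS : S ⊆ Finset.Icc 1 (n / 2))
    (hSidon : ∀ a ∈ S, ∀ b ∈ S, ∀ c ∈ S, ∀ d ∈ S,
      a + b = c + d → (a = c ∧ b = d) ∨ (a = d ∧ b = c)) :
    ¬ ∃ b : Fin 6 → ℤ, Function.Injective b ∧
      ∀ i j : Fin 6, i < j →
        b i + b j ∈ {x : ℤ | (1 ≤ x ∧ x ≤ 2 * (n : ℤ) ∧ Odd x) ∨
          ∃ a ∈ S, x = 4 * (a : ℤ) - 2} :=
  stmt_19_general n S hSidon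
end
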